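/- arXiv:1904.11668 — 2 statements merged into one kernel-verified Lean document; each statement's English description precedes it below -/
import Mathlib

section
/- Let (M, 𝒜) be an uncertainty matroid on a finite ground set E and suppose the collection 𝔅 of uniformly optimal bases of (M, 𝒜) is nonempty. Then 𝔅 is the collection of bases of a matroid on ground set E. -/
open Matroid

variable {α : Type*}

/-- `A` is an uncertainty area function for `M`: each element of the ground set gets a
nonempty bounded set of reals. -/
def IsAreaFun (M : Matroid α) (A : α → Set ℝ) : Prop :=
  ∀ e ∈ M.E, (A e).Nonempty ∧ BddBelow (A e) ∧ BddAbove (A e)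

/-- A realization: a weight function with `w e ∈ A e` for every element of the ground set. -/
def Realization (M : Matroid α) (A : α → Set ℝ) (w : α → ℝ) : Prop :=
  ∀ e ∈ M.E, w e ∈ A e

/-- The total `w`-weight of a set. -/
noncomputable def setWeight (w : α → ℝ) (T : Set α) : ℝ := ∑ᶠ e ∈ T, w e

/-- A `w`-basis: a basis of `M` of minimum total `w`-weight. -/
def IsMinBasis (M : Matroid α) (w : α → ℝ) (T : Set α) : Prop :=
  M.IsBase T ∧ ∀ B, M.IsBase B → setWeight w T ≤ setWeight w B

/-- A uniformly optimal basis (an `A`-basis): a `w`-basis for every realization `w`. -/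
def IsUOB (M : Matroid α) (A : α → Set ℝ) (T : Set α) : Prop :=
  ∀ w, Realization M A w → IsMinBasis M w T

/-- An element is certain if its area is a singleton. -/
def Certain (A : α → Set ℝ) (e : α) : Prop := ∃ r : ℝ, A e = {r}

/-- `e` is blue if every realization admits a minimum weight basis containing `e`. -/
def Blue (M : Matroid α) (A : α → Set ℝ) (e : α) : Prop :=
  ∀ w, Realization M A w → ∃ T, IsMinBasis M w T ∧ e ∈ T

/-- `e` is red if every realization admits a minimum weight basis avoiding `e`. -/
def Red (M : Matroid α) (A : α → Set ℝ) (e : α) : Prop :=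
  ∀ w, Realization M A w → ∃ T, IsMinBasis M w T ∧ e ∉ T

/-- `e` is colored if it is blue or red. -/
def Colored (M : Matroid α) (A : α → Set ℝ) (e : α) : Prop :=
  Blue M A e ∨ Red M A e

/-!
If `T₁, T₂` are uniformly optimal bases and `e ∈ T₁ \ T₂`, symmetric basis exchange gives
`f ∈ T₂ \ T₁` such that both `T₁ - e + f` and `T₂ - f + e` are bases. For any realization `w`,
optimality of `T₁` gives `w e ≤ w f` and optimality of `T₂` gives `w f ≤ w e`, so `T₁ - e + f`
has the optimal weight of `T₁`. Hence the uniformly optimal bases satisfy the basis exchange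
axiom, and on a finite ground set a nonempty such family is the family of bases of a matroid.
-/

open Set

variable {M : Matroid α} {A : α → Set ℝ}

namespace Matroid

variable {B₁ B₂ : Set α} {e : α}

/-- Any `f ≠ e` in the intersection of the fundamental circuit of `e` in `B₂` with the
fundamental cocircuit of `e` in `B₁` works; a circuit and a cocircuit never meet in one point. -/
lemma IsBase.exists_symm_exchange (h₁ : M.IsBase B₁) (h₂ : M.IsBase B₂) (he : e ∈ B₁ \ B₂) :
    ∃ f ∈ B₂ \ B₁, M.IsBase (insert f (B₁ \ {e})) ∧ M.IsBase (insert e (B₂ \ {f})) := by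
  have heE : e ∈ M.E := h₁.subset_ground he.1
  obtain ⟨f, ⟨hfC, hfK⟩, hfe⟩ : ∃ f ∈ M.fundCircuit e B₂ ∩ M.fundCocircuit e B₁, f ≠ e :=
    ((h₂.fundCircuit_isCircuit heE he.2).isCocircuit_inter_nontrivial
      (fundCocircuit_isCocircuit he.1 h₁)
      ⟨e, mem_fundCircuit .., mem_fundCocircuit ..⟩).exists_ne e
  have hfB₂ : f ∈ B₂ := by simpa [hfe] using M.fundCircuit_subset_insert e B₂ hfC
  have hfB₁ : f ∉ B₁ := fun hf ↦ hfe <| by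
    simpa using (M.fundCocircuit_inter_eq he.1).subset ⟨hfK, hf⟩
  refine ⟨f, ⟨hfB₂, hfB₁⟩, ?_, ?_⟩
  · have hfE : f ∈ M.E := h₂.subset_ground hfB₂
    rw [h₁.mem_fundCocircuit_iff_mem_fundCircuit,
      h₁.indep.mem_fundCircuit_iff (by rwa [h₁.closure_eq]) hfB₁] at hfK
    rw [insert_sdiff_singleton_comm hfe]
    exact h₁.exchange_isBase_of_indep' he.1 hfB₁ hfK
  · rw [h₂.indep.mem_fundCircuit_iff (by rwa [h₂.closure_eq]) he.2] at hfC
    rw [insert_sdiff_singleton_comm hfe.symm]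
    exact h₂.exchange_isBase_of_indep' hfB₂ he.2 hfC

end Matroid

lemma setWeight_insert_sdiff (w : α → ℝ) {T : Set α} (hT : T.Finite) {e f : α}
    (he : e ∈ T) (hf : f ∉ T) :
    setWeight w (insert f (T \ {e})) = setWeight w T - w e + w f := by
  have h_insert : setWeight w (insert f (T \ {e})) = w f + setWeight w (T \ {e}) :=
    finsum_mem_insert w (fun h ↦ hf h.1) hT.sdiff
  have h_split : setWeight w T = w e + setWeight w (T \ {e}) := by
    nth_rewrite 1 [← insert_eq_of_mem he, ← insert_sdiff_singleton]
    exact finsum_mem_insert w (fun h ↦ h.2 rfl) hT.sdiff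
  rw [h_insert, h_split]
  ring

lemma IsMinBasis.insert_sdiff_of_isBase [M.RankFinite] {w : α → ℝ} {T₁ T₂ : Set α} {e f : α}
    (h₁ : IsMinBasis M w T₁) (h₂ : IsMinBasis M w T₂) (he : e ∈ T₁ \ T₂) (hf : f ∈ T₂ \ T₁)
    (hb₁ : M.IsBase (insert f (T₁ \ {e}))) (hb₂ : M.IsBase (insert e (T₂ \ {f}))) :
    IsMinBasis M w (insert f (T₁ \ {e})) := by
  have hw₁ := setWeight_insert_sdiff w h₁.1.finite he.1 hf.2
  have hw₂ := setWeight_insert_sdiff w h₂.1.finite hf.1 he.2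
  have h₁_le := h₁.2 _ hb₁
  have h₂_le := h₂.2 _ hb₂
  refine ⟨hb₁, fun B hB ↦ ?_⟩
  have := h₁.2 B hB
  linarith

lemma IsAreaFun.exists_realization (hA : IsAreaFun M A) : ∃ w, Realization M A w := by
  have : ∀ e, ∃ r, e ∈ M.E → r ∈ A e := fun e ↦ by
    by_cases he : e ∈ M.E
    exacts [(hA e he).1.imp fun _ hr _ ↦ hr, ⟨0, fun h ↦ (he h).elim⟩]
  choose w hw using this
  exact ⟨w, hw⟩

lemma IsUOB.isBase (hA : IsAreaFun M A) {T : Set α} (hT : IsUOB M A T) : M.IsBase T :=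
  let ⟨_, hw⟩ := hA.exists_realization
  (hT _ hw).1

lemma exchangeProperty_isUOB [M.RankFinite] (hA : IsAreaFun M A) :
    ExchangeProperty (IsUOB M A) := by
  intro T₁ T₂ h₁ h₂ e he
  obtain ⟨f, hf, hb₁, hb₂⟩ := (h₁.isBase hA).exists_symm_exchange (h₂.isBase hA) he
  exact ⟨f, hf, fun w hw ↦ IsMinBasis.insert_sdiff_of_isBase (h₁ w hw) (h₂ w hw) he hf hb₁ hb₂⟩

/-- If nonempty, the collection of uniformly optimal bases forms the bases of a matroid
on the same ground set. -/
theorem uob_forms_matroid (M : Matroid α) (A : α → Set ℝ)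
    (hE : M.E.Finite) (hA : IsAreaFun M A)
    (hne : ∃ T, IsUOB M A T) :
    ∃ M' : Matroid α, M'.E = M.E ∧ ∀ T, M'.IsBase T ↔ IsUOB M A T := by
  have : M.Finite := ⟨hE⟩
  exact ⟨Matroid.ofIsBaseOfFinite hE (IsUOB M A) hne (exchangeProperty_isUOB hA)
    (fun _ hT ↦ (hT.isBase hA).subset_ground), rfl, fun _ ↦ Iff.rfl⟩
end

section
/- Let (M, 𝒜) be an uncertainty matroid on a finite ground set E, let X ⊆ E be a feasible query, and let e ∈ X be colored. Then X − e is a feasible query. Consequently, every feasible query that is minimal with respect to inclusion consists only of elements that are uncertain and uncolored. -/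
/-!
Fix a colored `e ∈ X` at some value `r` of its area. A revelation of `X \ {e}` then becomes a
revelation of `X`, so it has a uniformly optimal basis `T`, in which `e` is certain. A symmetric
basis exchange turns `T` into a uniformly optimal basis containing `e` if `e` is blue (avoiding
`e` if red): the exchange partner must weigh exactly `r` in every realization, for otherwise a
single realization pushes all candidate partners strictly to one side of `r`, and then no minimum
basis contains (avoids) `e`. Releasing `e` again shifts the weights of all bases that treat `e`
as `T` does by the same amount, and blueness (redness) supplies a minimum basis among them, so
`T` stays uniformly optimal. Hence a minimal feasible query has no colored element, and no
certain one either, since revealing a certain element changes nothing.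
-/

open Matroid

variable {α : Type*}

/-- `B` is a revelation of `X` in `(M, A)`: on `X` each area is replaced by a singleton
subset of itself, and outside `X` areas are unchanged. -/
def IsRevelation (M : Matroid α) (A : α → Set ℝ) (X : Set α) (B : α → Set ℝ) : Prop :=
  (∀ e ∈ X, ∃ r ∈ A e, B e = {r}) ∧ ∀ e ∉ X, B e = A e

/-- `F ⊆ E` is a feasible query if every revelation of `F` admits a uniformly optimal basis. -/
def FeasibleQuery (M : Matroid α) (A : α → Set ℝ) (F : Set α) : Prop :=
  F ⊆ M.E ∧ ∀ B, IsRevelation M A F B → ∃ T, IsUOB M B T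

namespace Matroid

variable {M : Matroid α} {B₁ B₂ : Set α} {e : α}

lemma IsBase.exists_symmetric_exchange (hB₁ : M.IsBase B₁) (hB₂ : M.IsBase B₂)
    (he : e ∈ B₁ \ B₂) :
    ∃ f ∈ B₂ \ B₁, M.IsBase (insert f (B₁ \ {e})) ∧ M.IsBase (insert e (B₂ \ {f})) := by
  have heE : e ∈ M.E := hB₁.subset_ground he.1
  have hC := hB₂.fundCircuit_isCircuit heE he.2
  -- `e` is spanned by the rest of its fundamental circuit but not by `B₁ \ {e}`.
  obtain ⟨f, ⟨hfC, hfe⟩, hfcl⟩ : ∃ f ∈ M.fundCircuit e B₂ \ {e}, f ∉ M.closure (B₁ \ {e}) := by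
    by_contra! h
    exact hB₁.indep.notMem_closure_sdiff_of_mem he.1
      (M.closure_subset_closure_of_subset_closure h (hC.mem_closure_sdiff_singleton_of_mem
        (M.mem_fundCircuit e B₂)))
  have hfe : f ≠ e := hfe
  have hfB₂ : f ∈ B₂ := (M.fundCircuit_subset_insert e B₂ hfC).resolve_left hfe
  have hfE : f ∈ M.E := hB₂.subset_ground hfB₂
  have hfB₁ : f ∉ B₁ := fun h => hfcl (M.mem_closure_of_mem' ⟨h, hfe⟩ hfE)
  refine ⟨f, ⟨hfB₂, hfB₁⟩, hB₁.exchange_base_of_notMem_closure he.1 hfcl hfE, ?_⟩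
  have hind := (hB₂.indep.mem_fundCircuit_iff (hB₂.closure_eq ▸ heE) he.2).1 hfC
  rw [← Set.insert_sdiff_singleton_comm hfe.symm] at hind
  exact hB₂.exchange_isBase_of_indep he.2 hind

end Matroid

open Set Function

section

variable {M : Matroid α} {A B : α → Set ℝ} {w : α → ℝ} {S T X : Set α} {e f g : α} {r : ℝ}

lemma setWeight_insert (w : α → ℝ) (hT : T.Finite) (he : e ∉ T) :
    setWeight w (insert e T) = w e + setWeight w T :=
  finsum_mem_insert w he hT

lemma setWeight_eq_add_sdiff_singleton (w : α → ℝ) (hT : T.Finite) (he : e ∈ T) :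
    setWeight w T = w e + setWeight w (T \ {e}) := by
  conv_lhs => rw [← insert_sdiff_self_of_mem he]
  exact setWeight_insert w hT.sdiff (notMem_sdiff_of_mem rfl)

lemma setWeight_insert_sdiff_singleton (w : α → ℝ) (hT : T.Finite) (hf : f ∈ T) (he : e ∉ T) :
    setWeight w (insert e (T \ {f})) = setWeight w T - w f + w e := by
  rw [setWeight_insert w hT.sdiff (fun h => he h.1), setWeight_eq_add_sdiff_singleton w hT hf]
  ring

lemma setWeight_update_of_notMem [DecidableEq α] (w : α → ℝ) (he : e ∉ T) (r : ℝ) :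
    setWeight (update w e r) T = setWeight w T :=
  finsum_mem_congr rfl fun _ hx => update_of_ne (ne_of_mem_of_not_mem hx he) _ _

lemma setWeight_update_of_mem [DecidableEq α] (w : α → ℝ) (hT : T.Finite) (he : e ∈ T) (r : ℝ) :
    setWeight (update w e r) T = setWeight w T - w e + r := by
  rw [setWeight_eq_add_sdiff_singleton _ hT he, setWeight_eq_add_sdiff_singleton w hT he,
    setWeight_update_of_notMem w (notMem_sdiff_of_mem (mem_singleton e)), update_self]
  ring

lemma IsMinBasis.le_of_exchange (hE : M.E.Finite) (hT : IsMinBasis M w T) (hf : f ∈ T)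
    (hg : g ∉ T) (hbase : M.IsBase (insert g (T \ {f}))) : w f ≤ w g := by
  have := hT.2 _ hbase
  rw [setWeight_insert_sdiff_singleton w (hE.subset hT.1.subset_ground) hf hg] at this
  linarith

lemma IsMinBasis.of_update [DecidableEq α] (hE : M.E.Finite)
    (hT : IsMinBasis M (update w e r) T) (hS : IsMinBasis M w S) (heTS : e ∈ T ↔ e ∈ S) :
    IsMinBasis M w T := by
  refine ⟨hT.1, fun B hB => ?_⟩
  have hTS := hT.2 S hS.1
  by_cases heS : e ∈ S
  · rw [setWeight_update_of_mem w (hE.subset hT.1.subset_ground) (heTS.2 heS),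
      setWeight_update_of_mem w (hE.subset hS.1.subset_ground) heS] at hTS
    linarith [hS.2 B hB]
  · rw [setWeight_update_of_notMem w (mt heTS.1 heS), setWeight_update_of_notMem w heS] at hTS
    linarith [hS.2 B hB]

lemma Realization.apply_eq (hw : Realization M B w) (he : e ∈ M.E) (hBe : B e = {r}) :
    w e = r := by
  simpa [hBe] using hw e he

lemma exists_realization_of_forall_exists (P : α → ℝ → Prop) (h : ∀ g ∈ M.E, ∃ x ∈ B g, P g x) :
    ∃ w, Realization M B w ∧ ∀ g ∈ M.E, P g (w g) := by
  classical
  choose x hxB hxP using h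
  refine ⟨fun g => if hg : g ∈ M.E then x g hg else 0, fun g hg => ?_, fun g hg => ?_⟩
  · simpa [dif_pos hg] using hxB g hg
  · simpa [dif_pos hg] using hxP g hg

lemma IsUOB.exchange (hE : M.E.Finite) (hT : IsUOB M B T) (hf : f ∈ T) (hg : g ∉ T)
    (hbase : M.IsBase (insert g (T \ {f}))) (hle : ∀ u, Realization M B u → u g ≤ u f) :
    IsUOB M B (insert g (T \ {f})) := by
  intro u hu
  refine ⟨hbase, fun S hS => ?_⟩
  rw [setWeight_insert_sdiff_singleton u (hE.subset (hT u hu).1.subset_ground) hf hg]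
  linarith [(hT u hu).2 S hS, hle u hu]

lemma IsUOB.exists_isUOB_mem_of_blue (hE : M.E.Finite) (hne : ∀ g ∈ M.E, (B g).Nonempty)
    (heE : e ∈ M.E) (hBe : B e = {r}) (hblue : Blue M B e) (hT : IsUOB M B T) :
    ∃ T', IsUOB M B T' ∧ e ∈ T' := by
  by_cases heT : e ∈ T
  · exact ⟨T, hT, heT⟩
  suffices ∃ f ∈ T, M.IsBase (insert e (T \ {f})) ∧ ∀ u, Realization M B u → r ≤ u f by
    obtain ⟨f, hfT, hbase, hf⟩ := this
    refine ⟨_, hT.exchange hE hfT heT hbase fun u hu => ?_, mem_insert e _⟩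
    rw [hu.apply_eq heE hBe]
    exact hf u hu
  by_contra! h
  obtain ⟨u, hu, hlt⟩ := exists_realization_of_forall_exists
    (fun f x => f ∈ T → M.IsBase (insert e (T \ {f})) → x < r) fun g hg => by
      by_cases hgT : g ∈ T ∧ M.IsBase (insert e (T \ {g}))
      · obtain ⟨u, hu, hlt⟩ := h g hgT.1 hgT.2
        exact ⟨u g, hu g hg, fun _ _ => hlt⟩
      · obtain ⟨x, hx⟩ := hne g hg
        exact ⟨x, hx, fun hgT' hbase => (hgT ⟨hgT', hbase⟩).elim⟩
  obtain ⟨S, hS, heS⟩ := hblue u hu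
  obtain ⟨f, ⟨hfT, hfS⟩, hSf, hTf⟩ :=
    hS.1.exists_symmetric_exchange (hT u hu).1 ⟨heS, heT⟩
  have hef := hS.le_of_exchange hE heS hfS hSf
  linarith [hu.apply_eq heE hBe, hlt f ((hT u hu).1.subset_ground hfT) hfT hTf]

lemma IsUOB.exists_isUOB_notMem_of_red (hE : M.E.Finite) (hne : ∀ g ∈ M.E, (B g).Nonempty)
    (heE : e ∈ M.E) (hBe : B e = {r}) (hred : Red M B e) (hT : IsUOB M B T) :
    ∃ T', IsUOB M B T' ∧ e ∉ T' := by
  by_cases heT : e ∈ T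
  swap
  · exact ⟨T, hT, heT⟩
  suffices ∃ g ∉ T, M.IsBase (insert g (T \ {e})) ∧ ∀ u, Realization M B u → u g ≤ r by
    obtain ⟨g, hgT, hbase, hg⟩ := this
    refine ⟨_, hT.exchange hE heT hgT hbase fun u hu => ?_, ?_⟩
    · rw [hu.apply_eq heE hBe]
      exact hg u hu
    · simp [ne_of_mem_of_not_mem heT hgT]
  by_contra! h
  obtain ⟨u, hu, hlt⟩ := exists_realization_of_forall_exists
    (fun g x => g ∉ T → M.IsBase (insert g (T \ {e})) → r < x) fun g hg => by
      by_cases hgT : g ∉ T ∧ M.IsBase (insert g (T \ {e}))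
      · obtain ⟨u, hu, hlt⟩ := h g hgT.1 hgT.2
        exact ⟨u g, hu g hg, fun _ _ => hlt⟩
      · obtain ⟨x, hx⟩ := hne g hg
        exact ⟨x, hx, fun hgT' hbase => (hgT ⟨hgT', hbase⟩).elim⟩
  obtain ⟨S, hS, heS⟩ := hred u hu
  obtain ⟨g, ⟨hgS, hgT⟩, hTg, hSg⟩ :=
    (hT u hu).1.exists_symmetric_exchange hS.1 ⟨heT, heS⟩
  have hge := hS.le_of_exchange hE hgS heS hSg
  linarith [hu.apply_eq heE hBe, hlt g (hS.1.subset_ground hgS) hgT hTg]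

lemma IsRevelation.realization (hB : IsRevelation M A X B) (hw : Realization M B w) :
    Realization M A w := by
  intro g hg
  by_cases hgX : g ∈ X
  · obtain ⟨s, hs, hBs⟩ := hB.1 g hgX
    simpa [show w g = s by simpa [hBs] using hw g hg] using hs
  · simpa [hB.2 g hgX] using hw g hg

lemma IsRevelation.nonempty (hA : ∀ g ∈ M.E, (A g).Nonempty) (hB : IsRevelation M A X B) :
    ∀ g ∈ M.E, (B g).Nonempty := by
  intro g hg
  by_cases hgX : g ∈ X
  · obtain ⟨s, -, hBs⟩ := hB.1 g hgX
    simp [hBs]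
  · simpa [hB.2 g hgX] using hA g hg

lemma IsRevelation.update_of_sdiff_singleton [DecidableEq α]
    (hB : IsRevelation M A (X \ {e}) B) (heX : e ∈ X) (hr : r ∈ A e) :
    IsRevelation M A X (update B e {r}) := by
  refine ⟨fun g hgX => ?_, fun g hgX => ?_⟩
  · by_cases hge : g = e
    · subst hge
      exact ⟨r, hr, update_self ..⟩
    · rw [update_of_ne hge]
      exact hB.1 g ⟨hgX, hge⟩
  · rw [update_of_ne (ne_of_mem_of_not_mem heX hgX).symm]
    exact hB.2 g fun h => hgX h.1

lemma Realization.update [DecidableEq α] (hw : Realization M B w) (r : ℝ) :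
    Realization M (update B e {r}) (update w e r) := by
  intro g hg
  by_cases hge : g = e
  · subst hge
    simp
  · simpa [update_of_ne hge] using hw g hg

lemma FeasibleQuery.sdiff_singleton_of_certain (hX : FeasibleQuery M A X) (he : Certain A e) :
    FeasibleQuery M A (X \ {e}) := by
  refine ⟨sdiff_subset.trans hX.1, fun B hB => hX.2 B ⟨fun g hgX => ?_, fun g hgX => ?_⟩⟩
  · by_cases hge : g = e
    · subst hge
      obtain ⟨s, hs⟩ := he
      exact ⟨s, by simp [hs], by rw [hB.2 g fun h => h.2 rfl, hs]⟩
    · exact hB.1 g ⟨hgX, hge⟩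
  · exact hB.2 g fun h => hgX h.1

lemma FeasibleQuery.sdiff_singleton_of_colored (hE : M.E.Finite) (hA : IsAreaFun M A)
    (hX : FeasibleQuery M A X) (heX : e ∈ X) (hc : Colored M A e) :
    FeasibleQuery M A (X \ {e}) := by
  classical
  refine ⟨sdiff_subset.trans hX.1, fun B hB => ?_⟩
  have heE := hX.1 heX
  obtain ⟨r, hr⟩ := (hA e heE).1
  have hB' := hB.update_of_sdiff_singleton heX hr
  have hne := hB'.nonempty fun g hg => (hA g hg).1
  obtain ⟨T, hT⟩ := hX.2 _ hB'
  rcases hc with hblue | hred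
  · obtain ⟨T', hT', heT'⟩ := hT.exists_isUOB_mem_of_blue hE hne heE (update_self ..)
      fun w hw => hblue w (hB'.realization hw)
    refine ⟨T', fun w hw => ?_⟩
    obtain ⟨S, hS, heS⟩ := hblue w (hB.realization hw)
    exact (hT' _ (hw.update r)).of_update hE hS (iff_of_true heT' heS)
  · obtain ⟨T', hT', heT'⟩ := hT.exists_isUOB_notMem_of_red hE hne heE (update_self ..)
      fun w hw => hred w (hB'.realization hw)
    refine ⟨T', fun w hw => ?_⟩
    obtain ⟨S, hS, heS⟩ := hred w (hB.realization hw)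
    exact (hT' _ (hw.update r)).of_update hE hS (iff_of_false heT' heS)

end

/-- Removing a colored element from a feasible query keeps it feasible; consequently
minimal feasible queries consist only of uncertain uncolored elements. -/
theorem feasible_remove_colored (M : Matroid α) (A : α → Set ℝ)
    (hE : M.E.Finite) (hA : IsAreaFun M A)
    (X : Set α) (hX : FeasibleQuery M A X)
    (e : α) (heX : e ∈ X) (hc : Colored M A e) :
    FeasibleQuery M A (X \ {e}) ∧
      ∀ Y, (FeasibleQuery M A Y ∧ ∀ Z, FeasibleQuery M A Z → Z ⊆ Y → Z = Y) →
        ∀ f ∈ Y, ¬ Certain A f ∧ ¬ Colored M A f := by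
  refine ⟨hX.sdiff_singleton_of_colored hE hA heX hc, ?_⟩
  rintro Y ⟨hY, hYmin⟩ f hfY
  have hnot : ¬ FeasibleQuery M A (Y \ {f}) := fun h =>
    notMem_sdiff_of_mem (mem_singleton f) ((hYmin _ h sdiff_subset).symm ▸ hfY)
  exact ⟨fun hf => hnot (hY.sdiff_singleton_of_certain hf),
    fun hf => hnot (hY.sdiff_singleton_of_colored hE hA hfY hf)⟩
end
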